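/- arXiv:1904.01517 — 5 statements merged into one kernel-verified Lean document; each statement's English description precedes it below -/
import Mathlib

section
/- Let d ∈ ℕ, 𝔡 ∈ {1, …, d−1}, let N ⊆ ℝ^d be a nonempty 𝔡-dimensional C^1-submanifold of ℝ^d, and let V ⊆ ℝ^d be an open set admitting the C^1 nearest-point projection x ↦ x_* onto N. Then for every x ∈ V with x ∉ N, the distance function y ↦ dd(y, N) is Fréchet differentiable at x and its gradient at x equals (x − x_*)/‖x − x_*‖; equivalently, its Fréchet derivative at x is the linear functional v ↦ ⟪(x − x_*)/‖x − x_*‖, v⟫. -/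
noncomputable section

/-- `N` is a `𝔡`-dimensional `C¹`-submanifold of `ℝ^d`: around every point of `N` there are an
open set `W` and a continuously differentiable map `Φ : ℝ^d → ℝ^(d−𝔡)` whose Fréchet derivative
is surjective at every point of `W` such that `N ∩ W = {y ∈ W : Φ y = 0}`. -/
def IsC1Submanifold (d 𝔡 : ℕ) (N : Set (EuclideanSpace ℝ (Fin d))) : Prop :=
  ∀ x ∈ N, ∃ (W : Set (EuclideanSpace ℝ (Fin d)))
    (Φ : EuclideanSpace ℝ (Fin d) → EuclideanSpace ℝ (Fin (d - 𝔡))),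
    IsOpen W ∧ x ∈ W ∧ ContDiff ℝ 1 Φ ∧
    (∀ y ∈ W, Function.Surjective (fderiv ℝ Φ y)) ∧
    N ∩ W = {y ∈ W | Φ y = 0}

/-- The open set `V` admits the `C¹` nearest-point projection `p` onto `N`: for every `x ∈ V`,
`p x` is the unique nearest point of `N` to `x`, and `p` is continuously differentiable on `V`. -/
def AdmitsC1Proj {d : ℕ} (N V : Set (EuclideanSpace ℝ (Fin d)))
    (p : EuclideanSpace ℝ (Fin d) → EuclideanSpace ℝ (Fin d)) : Prop :=
  (∀ x ∈ V, p x ∈ N ∧ ‖x - p x‖ = Metric.infDist x N ∧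
      ∀ y ∈ N, ‖x - y‖ = Metric.infDist x N → y = p x) ∧
  ContDiffOn ℝ 1 p V

/-- The tubular neighborhood `V_{R,δ}(x₀)`: points `x + v` with `x ∈ closedBall x₀ R ∩ N` and
`v ⊥ T_x N`, `‖v‖ < δ`. -/
def VRd {d : ℕ} (N : Set (EuclideanSpace ℝ (Fin d))) (x₀ : EuclideanSpace ℝ (Fin d))
    (R δ : ℝ) : Set (EuclideanSpace ℝ (Fin d)) :=
  {y | ∃ x ∈ Metric.closedBall x₀ R ∩ N, ∃ v : EuclideanSpace ℝ (Fin d),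
    (∀ w ∈ tangentConeAt ℝ N x, inner ℝ v w = (0 : ℝ)) ∧ ‖v‖ < δ ∧ y = x + v}

/-- The Hessian of `f` at `θ`, as the (continuous) linear map obtained by differentiating the
gradient; it satisfies `⟪hess f θ v, w⟫ = D²f(θ)(v, w)` for `C²` functions `f`. -/
def hess {d : ℕ} (f : EuclideanSpace ℝ (Fin d) → ℝ) (θ : EuclideanSpace ℝ (Fin d)) :
    EuclideanSpace ℝ (Fin d) →L[ℝ] EuclideanSpace ℝ (Fin d) :=
  fderiv ℝ (gradient f) θ

end

open scoped RealInnerProductSpace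
open Filter Topology Metric

/- The distance function to any set is squeezed at `x` between the smooth function `‖· - p x‖`
from above and, from below, the affine functions obtained by moving along the unit normals
`(x - p y)/‖x - p y‖`; these normals tend to `(x - p x)/‖x - p x‖` by continuity of `p`. -/

theorem hasFDerivAt_of_le_of_lower_bound_tendsto {E : Type*} [NormedAddCommGroup E]
    [NormedSpace ℝ E] {f φ : E → ℝ} {L : E →L[ℝ] ℝ} {ℓ : E → E →L[ℝ] ℝ} {x : E}
    (hφ : HasFDerivAt φ L x) (hle : ∀ᶠ y in 𝓝 x, f y ≤ φ y) (hfx : f x = φ x)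
    (hge : ∀ᶠ y in 𝓝 x, f x + ℓ y (y - x) ≤ f y) (hℓ : Tendsto ℓ (𝓝 x) (𝓝 L)) :
    HasFDerivAt f L x := by
  refine .of_isLittleO <| Asymptotics.isLittleO_iff.mpr fun ε hε => ?_
  have hℓε : ∀ᶠ y in 𝓝 x, ‖ℓ y - L‖ < ε := by
    simpa only [dist_eq_norm] using Metric.tendsto_nhds.mp hℓ ε hε
  filter_upwards [Asymptotics.isLittleO_iff.mp hφ.isLittleO hε, hle, hge, hℓε]
    with y hφy hley hgey hℓy
  rw [Real.norm_eq_abs, abs_le]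
  constructor
  · have hop : |(ℓ y - L) (y - x)| ≤ ε * ‖y - x‖ :=
      ((ℓ y - L).le_opNorm (y - x)).trans (by gcongr)
    have := neg_abs_le ((ℓ y - L) (y - x))
    simp only [sub_apply] at hop this
    linarith
  · have := le_abs_self (φ y - φ x - L (y - x))
    rw [Real.norm_eq_abs] at hφy
    linarith

theorem hasFDerivAt_norm_sub_const {E : Type*} [NormedAddCommGroup E] [InnerProductSpace ℝ E]
    {x c : E} (h : x ≠ c) :
    HasFDerivAt (fun y => ‖y - c‖) (innerSL ℝ (‖x - c‖⁻¹ • (x - c))) x := by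
  have hsq : HasFDerivAt (fun y => ‖y - c‖ ^ 2) (2 • (innerSL ℝ (x - c)).comp (.id ℝ E)) x := by
    simpa using ((hasFDerivAt_id x).sub_const c).norm_sq
  have hne : ‖x - c‖ ≠ 0 := norm_ne_zero_iff.mpr (sub_ne_zero.mpr h)
  convert hsq.sqrt (pow_ne_zero 2 hne) using 1
  · simp [Real.sqrt_sq (norm_nonneg _)]
  · ext v
    simp only [map_smul, smul_apply, coe_innerSL_apply, smul_eq_mul, Real.sqrt_sq (norm_nonneg _),
      one_div, mul_inv_rev, ContinuousLinearMap.comp_id, nsmul_eq_mul, Nat.cast_ofNat]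
    field_simp

theorem Metric.infDist_add_inner_le {E : Type*} [NormedAddCommGroup E] [InnerProductSpace ℝ E]
    {s : Set E} {z : E} (hz : z ∈ s) (x y : E) :
    infDist x s + ⟪‖x - z‖⁻¹ • (x - z), y - x⟫ ≤ ‖y - z‖ := by
  set u := ‖x - z‖⁻¹ • (x - z)
  have hu : ‖u‖ ≤ 1 := by
    rcases eq_or_ne (x - z) 0 with h | h
    · simp [u, h]
    · simp [u, norm_smul, h]
  have hux : ⟪u, x - z⟫ = ‖x - z‖ := by
    rcases eq_or_ne (x - z) 0 with h | h
    · simp [h]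
    · rw [real_inner_smul_left, real_inner_self_eq_norm_sq]
      field_simp [norm_ne_zero_iff.mpr h]
  calc infDist x s + ⟪u, y - x⟫ ≤ ‖x - z‖ + ⟪u, y - x⟫ := by
        gcongr; simpa [dist_eq_norm] using infDist_le_dist_of_mem hz
    _ = ⟪u, y - z⟫ := by rw [← hux, ← inner_add_right, sub_add_sub_cancel']
    _ ≤ ‖u‖ * ‖y - z‖ := real_inner_le_norm u (y - z)
    _ ≤ ‖y - z‖ := mul_le_of_le_one_left (norm_nonneg _) hu

theorem hasGradientAt_infDist_of_nearestPoint {E : Type*} [NormedAddCommGroup E]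
    [InnerProductSpace ℝ E] [CompleteSpace E] {s : Set E} {p : E → E} {x : E}
    (hp : ContinuousAt p x) (hnear : ∀ᶠ y in 𝓝 x, p y ∈ s ∧ ‖y - p y‖ = infDist y s)
    (hx : x ∉ s) :
    HasGradientAt (infDist · s) (‖x - p x‖⁻¹ • (x - p x)) x := by
  obtain ⟨hpx, hdist⟩ := hnear.self_of_nhds
  have hxp : x - p x ≠ 0 := sub_ne_zero.mpr fun h => hx (h ▸ hpx)
  have hnormal : Tendsto (fun y => ‖x - p y‖⁻¹ • (x - p y)) (𝓝 x) (𝓝 (‖x - p x‖⁻¹ • (x - p x))) :=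
    have hsub : ContinuousAt (fun y => x - p y) x := continuousAt_const.sub hp
    ((hsub.norm.inv₀ (norm_ne_zero_iff.mpr hxp)).smul hsub).tendsto
  refine hasFDerivAt_of_le_of_lower_bound_tendsto (hasFDerivAt_norm_sub_const (sub_ne_zero.mp hxp))
    (.of_forall fun y => by simpa [dist_eq_norm] using infDist_le_dist_of_mem hpx) hdist.symm
    ?_ ((innerSL ℝ).continuous.tendsto _ |>.comp hnormal)
  filter_upwards [hnear] with y ⟨hpy, hdisty⟩
  exact (infDist_add_inner_le hpy x y).trans_eq hdisty

theorem stmt_4_general (d : ℕ)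
    (N : Set (EuclideanSpace ℝ (Fin d)))
    (V : Set (EuclideanSpace ℝ (Fin d))) (hVopen : IsOpen V)
    (p : EuclideanSpace ℝ (Fin d) → EuclideanSpace ℝ (Fin d))
    (hproj : AdmitsC1Proj N V p) :
    ∀ x ∈ V, x ∉ N →
      HasGradientAt (fun y => Metric.infDist y N) (‖x - p x‖⁻¹ • (x - p x)) x := by
  intro x hx hxN
  have hnear : ∀ᶠ y in 𝓝 x, p y ∈ N ∧ ‖y - p y‖ = infDist y N :=
    eventually_of_mem (hVopen.mem_nhds hx) fun y hy => ⟨(hproj.1 y hy).1, (hproj.1 y hy).2.1⟩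
  exact hasGradientAt_infDist_of_nearestPoint
    (hproj.2.continuousOn.continuousAt (hVopen.mem_nhds hx)) hnear hxN

/-- **Gradient of the distance function** (Lemma 2.4).  If `V` is an open set admitting the `C¹`
nearest-point projection `p` onto the nonempty `𝔡`-dimensional `C¹`-submanifold `N ⊆ ℝ^d`,
`𝔡 ∈ {1,…,d−1}`, then for every `x ∈ V` with `x ∉ N` the distance function `y ↦ dd(y, N)` has
at `x` the gradient `(x − p x)/‖x − p x‖`. -/
theorem stmt_4 (d 𝔡 : ℕ) (hd : 1 ≤ 𝔡) (h𝔡 : 𝔡 ≤ d - 1)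
    (N : Set (EuclideanSpace ℝ (Fin d))) (hNne : N.Nonempty)
    (hN : IsC1Submanifold d 𝔡 N)
    (V : Set (EuclideanSpace ℝ (Fin d))) (hVopen : IsOpen V)
    (p : EuclideanSpace ℝ (Fin d) → EuclideanSpace ℝ (Fin d))
    (hproj : AdmitsC1Proj N V p) :
    ∀ x ∈ V, x ∉ N →
      HasGradientAt (fun y => Metric.infDist y N) (‖x - p x‖⁻¹ • (x - p x)) x :=
  stmt_4_general d N V hVopen p hproj
end

section
/- Let d ∈ ℕ, 𝔡 ∈ {1, …, d−1}, let N ⊆ ℝ^d be a nonempty 𝔡-dimensional C^1-submanifold of ℝ^d, let x₀ ∈ N, assume there exists r₁ > 0 such that (the closed ball of radius r₁ around x₀) ∩ N is a closed subset of ℝ^d, and let V* ⊆ ℝ^d be an open set containing x₀ that admits the C^1 nearest-point projection x ↦ x_* onto N. Then there exist R₀, δ₀ ∈ (0, ∞) such that for every R ∈ (0, R₀] and δ ∈ (0, δ₀]: (i) the closure of V_{R,δ}(x₀) is contained in V*; (ii) V_{R,δ}(x₀) = {x ∈ ℝ^d : dd(x, N) = dd(x, (closed ball of radius R around x₀) ∩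 N) < δ}; and (iii) for every x ∈ (closed ball of radius R around x₀) ∩ N and every v ∈ T_x N^⊥ with ‖v‖ < δ, the nearest-point projection of x + v onto N equals x. -/
/-!
Let `p` be the projection. It is constant on each segment from `y ∈ V` towards `p y`, so
`Dp(y) (y - p y) = 0`; it is the identity on `N`, so `Dp(x)` fixes `T_x N` and maps into it.
If `x ∈ N` is a nearest point to `y`, Fermat's rule for `t ↦ ‖y - p (x + t • h)‖²` gives
`y - x ⊥ range Dp(x) ⊇ T_x N`; this is the inclusion `⊇` in (ii).

Conversely let `v` be normal at `x`. The curve `t ↦ p (x + t • v)` has velocity `Dp(x) v` in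
`T_x N ⊥ v` and stays within `t ‖v‖` of `x + t • v`, which forces `Dp(x) v = 0`. Write
`x + t • v = z t + t • ν t` with `z t = p (x + t • v)`. Along the ray `s ↦ z + s • ν` the
function `f s = p (z + s • ν) - z` satisfies `s • f' s = Dp (f s)`, so by Grönwall `f` vanishes
from `s = t` up to `s = 1` as long as `Dp` stays bounded. Since `z t → x` and `ν t → v`,
letting `t → 0⁺` gives `p (x + v) = x`: this is (iii), and it yields the inclusion `⊆` in (ii).
-/

open Metric Set Filter Topology
open scoped RealInnerProductSpace

section Calculus

variable {E F : Type*} [NormedAddCommGroup E] [NormedSpace ℝ E] [NormedAddCommGroup F]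
  [NormedSpace ℝ F]

theorem DifferentiableAt.hasDerivAt_comp_add_smul {f : E → F} {x v : E} {s : ℝ}
    (hf : DifferentiableAt ℝ f (x + s • v)) :
    HasDerivAt (fun t : ℝ => f (x + t • v)) (fderiv ℝ f (x + s • v) v) s :=
  hf.hasFDerivAt.comp_hasDerivAt s (by simpa using ((hasDerivAt_id s).smul_const v).const_add x)

theorem DifferentiableAt.tendsto_slope_along {f : E → F} {x : E} (hf : DifferentiableAt ℝ f x)
    (v : E) :
    Tendsto (fun t : ℝ => t⁻¹ • (f (x + t • v) - f x)) (𝓝[>] 0) (𝓝 (fderiv ℝ f x v)) := by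
  have hf' : DifferentiableAt ℝ f (x + (0 : ℝ) • v) := by simpa using hf
  simpa using hf'.hasDerivAt_comp_add_smul.tendsto_slope_zero_right

theorem DifferentiableAt.fderiv_apply_eq_zero_of_eventually_eq {f : E → F} {x v : E}
    (hf : DifferentiableAt ℝ f x) (hconst : ∀ᶠ t in 𝓝[>] (0 : ℝ), f (x + t • v) = f x) :
    fderiv ℝ f x v = 0 :=
  tendsto_nhds_unique (hf.tendsto_slope_along v) <| tendsto_const_nhds.congr' <| by
    filter_upwards [hconst] with t ht
    simp [ht]

theorem eventually_add_smul_mem {V : Set E} {x : E} (hV : IsOpen V) (hx : x ∈ V) (v : E) :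
    ∀ᶠ t in 𝓝 (0 : ℝ), x + t • v ∈ V := by
  have hcont : Continuous (fun t : ℝ => x + t • v) := by fun_prop
  exact hcont.continuousAt.preimage_mem_nhds (by simpa using hV.mem_nhds hx)

end Calculus

section NearestPoint

variable {E : Type*} [NormedAddCommGroup E]

def IsNearestPointProj (N V : Set E) (p : E → E) : Prop :=
  ∀ x ∈ V, p x ∈ N ∧ ‖x - p x‖ = infDist x N ∧ ∀ y ∈ N, ‖x - y‖ = infDist x N → y = p x

namespace IsNearestPointProj

variable {N V : Set E} {p : E → E} {x y z : E}

theorem norm_sub_apply_le (hP : IsNearestPointProj N V p) (hy : y ∈ V) (hz : z ∈ N) :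
    ‖y - p y‖ ≤ ‖y - z‖ := by
  rw [(hP y hy).2.1, ← dist_eq_norm]
  exact infDist_le_dist_of_mem hz

theorem apply_eq_of_norm_sub_le (hP : IsNearestPointProj N V p) (hy : y ∈ V) (hz : z ∈ N)
    (hle : ‖y - z‖ ≤ ‖y - p y‖) : p y = z := by
  refine ((hP y hy).2.2 z hz (le_antisymm ?_ ?_)).symm
  · exact hle.trans (hP y hy).2.1.le
  · rw [← dist_eq_norm]
    exact infDist_le_dist_of_mem hz

theorem apply_of_mem (hP : IsNearestPointProj N V p) (hxN : x ∈ N) (hxV : x ∈ V) : p x = x :=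
  hP.apply_eq_of_norm_sub_le hxV hxN (by simp)

variable [NormedSpace ℝ E]

theorem apply_add_smul_apply_sub (hP : IsNearestPointProj N V p) (hy : y ∈ V) {t : ℝ}
    (ht : t ∈ Icc (0 : ℝ) 1) (hyt : y + t • (p y - y) ∈ V) : p (y + t • (p y - y)) = p y := by
  set w := y + t • (p y - y)
  have hw : ‖w - p y‖ = (1 - t) * ‖y - p y‖ := by
    rw [show w - p y = (1 - t) • (y - p y) by module, norm_smul,
      Real.norm_of_nonneg (by linarith [ht.2])]
  have hyw : ‖y - w‖ = t * ‖y - p y‖ := by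
    rw [show y - w = t • (y - p y) by module, norm_smul, Real.norm_of_nonneg ht.1]
  refine hP.apply_eq_of_norm_sub_le hyt (hP y hy).1 ?_
  have h1 := hP.norm_sub_apply_le hy (hP w hyt).1
  have h2 : ‖y - p w‖ ≤ ‖y - w‖ + ‖w - p w‖ := norm_sub_le_norm_sub_add_norm_sub _ _ _
  rw [hw]
  linarith

theorem fderiv_apply_sub_eq_zero (hP : IsNearestPointProj N V p) (hV : IsOpen V)
    (hp : DifferentiableOn ℝ p V) (hy : y ∈ V) : fderiv ℝ p y (y - p y) = 0 := by
  have hconst : ∀ᶠ t in 𝓝[>] (0 : ℝ), p (y + t • (p y - y)) = p y := by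
    filter_upwards [(eventually_add_smul_mem hV hy _).filter_mono nhdsWithin_le_nhds,
      Ioo_mem_nhdsGT (zero_lt_one' ℝ)] with t htV ht
    exact hP.apply_add_smul_apply_sub hy (Ioo_subset_Icc_self ht) htV
  have h := (hp.differentiableAt (hV.mem_nhds hy)).fderiv_apply_eq_zero_of_eventually_eq hconst
  rw [← neg_sub, map_neg, h, neg_zero]

theorem apply_add_smul_eq_of_apply_add_smul_eq (hP : IsNearestPointProj N V p) (hV : IsOpen V)
    (hp : DifferentiableOn ℝ p V) {ν : E} {a b M : ℝ} (ha : 0 < a) (hbase : p (z + a • ν) = z)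
    (hray : ∀ s ∈ Icc a b, z + s • ν ∈ V) (hM : ∀ s ∈ Icc a b, ‖fderiv ℝ p (z + s • ν)‖ ≤ M) :
    ∀ s ∈ Icc a b, p (z + s • ν) = z := by
  set f : ℝ → E := fun s => p (z + s • ν) - z
  have hderiv : ∀ s ∈ Icc a b, HasDerivAt f (fderiv ℝ p (z + s • ν) ν) s := fun s hs =>
    (hp.differentiableAt (hV.mem_nhds (hray s hs))).hasDerivAt_comp_add_smul.sub_const z
  -- `Dp` kills `(z + s • ν) - p (z + s • ν) = s • ν - f s`, so `s • f' s = Dp (f s)`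
  have hbound : ∀ s ∈ Ico a b, ‖fderiv ℝ p (z + s • ν) ν‖ ≤ M / a * ‖f s‖ + 0 := by
    intro s hs
    have hsIcc := Ico_subset_Icc_self hs
    have hs0 : 0 < s := ha.trans_le hs.1
    have hker := hP.fderiv_apply_sub_eq_zero hV hp (hray s hsIcc)
    rw [show z + s • ν - p (z + s • ν) = s • ν - f s by simp only [f]; abel, map_sub, map_smul,
      sub_eq_zero] at hker
    have hle : s * ‖fderiv ℝ p (z + s • ν) ν‖ ≤ M * ‖f s‖ := by
      calc s * ‖fderiv ℝ p (z + s • ν) ν‖ = ‖s • fderiv ℝ p (z + s • ν) ν‖ := by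
            rw [norm_smul, Real.norm_of_nonneg hs0.le]
        _ ≤ M * ‖f s‖ := by
          rw [hker]
          exact (ContinuousLinearMap.le_opNorm _ _).trans
            (mul_le_mul_of_nonneg_right (hM s hsIcc) (norm_nonneg _))
    have hM0 : 0 ≤ M := (norm_nonneg _).trans (hM s hsIcc)
    calc ‖fderiv ℝ p (z + s • ν) ν‖ ≤ M * ‖f s‖ / s := by rw [le_div_iff₀ hs0]; linarith
      _ ≤ M * ‖f s‖ / a := div_le_div_of_nonneg_left (by positivity) ha hs.1
      _ = M / a * ‖f s‖ + 0 := by ring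
  have hgronwall := norm_le_gronwallBound_of_norm_deriv_right_le
    (fun s hs => (hderiv s hs).continuousAt.continuousWithinAt)
    (fun s hs => (hderiv s (Ico_subset_Icc_self hs)).hasDerivWithinAt) (δ := 0) (by simp [f, hbase])
    hbound
  intro s hs
  have h := hgronwall s hs
  rw [gronwallBound_ε0_δ0, norm_le_zero_iff, sub_eq_zero] at h
  exact h

theorem fderiv_apply_mem_tangentConeAt (hP : IsNearestPointProj N V p) (hV : IsOpen V)
    (hp : DifferentiableOn ℝ p V) (hxN : x ∈ N) (hxV : x ∈ V) (v : E) :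
    fderiv ℝ p x v ∈ tangentConeAt ℝ N x := by
  have hmaps := (hp.differentiableAt (hV.mem_nhds hxV)).hasFDerivAt.hasFDerivWithinAt
    (s := V) |>.mapsTo_tangent_cone (by rw [tangentConeAt_of_mem_nhds (hV.mem_nhds hxV)]; trivial :
      v ∈ tangentConeAt ℝ V x)
  rw [hP.apply_of_mem hxN hxV] at hmaps
  exact tangentConeAt_mono (image_subset_iff.2 fun y hy => (hP y hy).1) hmaps

theorem fderiv_apply_of_mem_tangentConeAt (hP : IsNearestPointProj N V p) (hV : IsOpen V)
    (hp : DifferentiableOn ℝ p V) (hxN : x ∈ N) (hxV : x ∈ V) {w : E}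
    (hw : w ∈ tangentConeAt ℝ N x) : fderiv ℝ p x w = w := by
  have hid : HasFDerivWithinAt p (ContinuousLinearMap.id ℝ E) N x := by
    refine (hasFDerivWithinAt_id x N).congr_of_eventuallyEq ?_ (hP.apply_of_mem hxN hxV)
    filter_upwards [self_mem_nhdsWithin, mem_nhdsWithin_of_mem_nhds (hV.mem_nhds hxV)]
      with y hyN hyV
    exact hP.apply_of_mem hyN hyV
  exact (hp.differentiableAt (hV.mem_nhds hxV)).hasFDerivAt.hasFDerivWithinAt.unique_on hid hw

end IsNearestPointProj

end NearestPoint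

namespace IsNearestPointProj

variable {E : Type*} [NormedAddCommGroup E] [InnerProductSpace ℝ E] {N V : Set E} {p : E → E}
  {x y : E}

theorem inner_sub_fderiv_apply_eq_zero (hP : IsNearestPointProj N V p) (hV : IsOpen V)
    (hp : DifferentiableOn ℝ p V) (hxN : x ∈ N) (hxV : x ∈ V)
    (hmin : ∀ z ∈ N, ‖y - x‖ ≤ ‖y - z‖) (h : E) : ⟪y - x, fderiv ℝ p x h⟫ = 0 := by
  have hx0 : x + (0 : ℝ) • h ∈ V := by simpa using hxV
  have hderiv : HasDerivAt (fun t : ℝ => ‖y - p (x + t • h)‖ ^ 2)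
      (2 * ⟪y - x, -fderiv ℝ p x h⟫) 0 := by
    have := ((hp.differentiableAt (hV.mem_nhds hx0)).hasDerivAt_comp_add_smul.const_sub y).norm_sq
    simpa [hP.apply_of_mem hxN hxV] using this
  have hmin' : IsLocalMin (fun t : ℝ => ‖y - p (x + t • h)‖ ^ 2) 0 := by
    filter_upwards [eventually_add_smul_mem hV hxV h] with t ht
    simpa [hP.apply_of_mem hxN hxV] using
      pow_le_pow_left₀ (norm_nonneg _) (hmin _ (hP _ ht).1) 2
  simpa using hmin'.hasDerivAt_eq_zero hderiv

theorem inner_sub_eq_zero_of_mem_tangentConeAt (hP : IsNearestPointProj N V p) (hV : IsOpen V)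
    (hp : DifferentiableOn ℝ p V) (hxN : x ∈ N) (hxV : x ∈ V)
    (hmin : ∀ z ∈ N, ‖y - x‖ ≤ ‖y - z‖) {w : E} (hw : w ∈ tangentConeAt ℝ N x) :
    ⟪y - x, w⟫ = 0 := by
  rw [← hP.fderiv_apply_of_mem_tangentConeAt hV hp hxN hxV hw]
  exact hP.inner_sub_fderiv_apply_eq_zero hV hp hxN hxV hmin w

theorem fderiv_apply_eq_zero_of_forall_inner_eq_zero (hP : IsNearestPointProj N V p)
    (hV : IsOpen V) (hp : DifferentiableOn ℝ p V) (hxN : x ∈ N) (hxV : x ∈ V) {v : E}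
    (hv : ∀ w ∈ tangentConeAt ℝ N x, ⟪v, w⟫ = 0) : fderiv ℝ p x v = 0 := by
  set ζ := fderiv ℝ p x v
  have hvζ : ⟪v, ζ⟫ = 0 := hv ζ (hP.fderiv_apply_mem_tangentConeAt hV hp hxN hxV v)
  -- `‖x + t • v - p (x + t • v)‖ ≤ ‖t • v‖` since `x ∈ N`; divide by `t` and let `t → 0⁺`
  have hle : ‖v - ζ‖ ≤ ‖v‖ := by
    have hslope := (hp.differentiableAt (hV.mem_nhds hxV)).tendsto_slope_along v
    refine le_of_tendsto (tendsto_const_nhds.sub hslope).norm ?_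
    filter_upwards [(eventually_add_smul_mem hV hxV v).filter_mono nhdsWithin_le_nhds,
      self_mem_nhdsWithin] with t htV (ht : 0 < t)
    have h := hP.norm_sub_apply_le htV hxN
    rw [show x + t • v - x = t • v by abel, norm_smul, Real.norm_of_nonneg ht.le] at h
    rw [show v - t⁻¹ • (p (x + t • v) - p x) = t⁻¹ • (x + t • v - p (x + t • v)) by
        rw [hP.apply_of_mem hxN hxV, smul_sub, smul_sub, smul_add, inv_smul_smul₀ ht.ne']; abel,
      norm_smul, Real.norm_of_nonneg (inv_nonneg.2 ht.le)]
    calc t⁻¹ * ‖x + t • v - p (x + t • v)‖ ≤ t⁻¹ * (t * ‖v‖) := by gcongr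
      _ = ‖v‖ := by field_simp
  have hsq : ‖v - ζ‖ ^ 2 = ‖v‖ ^ 2 - 2 * ⟪v, ζ⟫ + ‖ζ‖ ^ 2 := norm_sub_sq_real v ζ
  have hζ : ‖ζ‖ ^ 2 ≤ 0 := by nlinarith [norm_nonneg (v - ζ)]
  exact norm_eq_zero.1 (by nlinarith [norm_nonneg ζ])

theorem apply_add_of_forall_inner_eq_zero (hP : IsNearestPointProj N V p) (hV : IsOpen V)
    (hp : DifferentiableOn ℝ p V) (hxN : x ∈ N) {r M : ℝ} (hball : closedBall x r ⊆ V)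
    (hM : ∀ y ∈ closedBall x r, ‖fderiv ℝ p y‖ ≤ M) {v : E}
    (hv : ∀ w ∈ tangentConeAt ℝ N x, ⟪v, w⟫ = 0) (hvr : ‖v‖ < r) : p (x + v) = x := by
  have hxV : x ∈ V := hball (mem_closedBall_self ((norm_nonneg v).trans hvr.le))
  have hpx : p x = x := hP.apply_of_mem hxN hxV
  have hd : DifferentiableAt ℝ p x := hp.differentiableAt (hV.mem_nhds hxV)
  set z : ℝ → E := fun t => p (x + t • v)
  set ν : ℝ → E := fun t => v - t⁻¹ • (z t - x)
  have hz : Tendsto z (𝓝[>] 0) (𝓝 x) := by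
    have hline : Tendsto (fun t : ℝ => x + t • v) (𝓝[>] 0) (𝓝 x) :=
      (Continuous.tendsto' (by fun_prop) 0 x (by simp)).mono_left nhdsWithin_le_nhds
    have := hd.continuousAt.tendsto.comp hline
    rwa [hpx] at this
  have hν : Tendsto ν (𝓝[>] 0) (𝓝 v) := by
    have hslope := hd.tendsto_slope_along v
    rw [hP.fderiv_apply_eq_zero_of_forall_inner_eq_zero hV hp hxN hxV hv, hpx] at hslope
    simpa using tendsto_const_nhds.sub hslope
  have hsmall : ∀ᶠ t in 𝓝[>] 0, ‖z t - x‖ + ‖ν t‖ < r :=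
    ((hz.sub_const x).norm.add hν.norm).eventually (gt_mem_nhds (by simpa using hvr))
  have hray : ∀ᶠ t in 𝓝[>] 0, p (z t + ν t) = z t := by
    filter_upwards [hsmall, Ioc_mem_nhdsGT one_pos] with t hsmall ht
    have hmem : ∀ s ∈ Icc t 1, z t + s • ν t ∈ closedBall x r := by
      intro s hs
      have hs0 : 0 ≤ s := ht.1.le.trans hs.1
      rw [mem_closedBall, dist_eq_norm]
      calc ‖z t + s • ν t - x‖ ≤ ‖z t - x‖ + ‖s • ν t‖ := by
            rw [show z t + s • ν t - x = (z t - x) + s • ν t by abel]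
            exact norm_add_le _ _
        _ ≤ ‖z t - x‖ + ‖ν t‖ := by
            rw [norm_smul, Real.norm_of_nonneg hs0]
            gcongr
            exact mul_le_of_le_one_left (norm_nonneg _) hs.2
        _ ≤ r := hsmall.le
    have hbase : p (z t + t • ν t) = z t := by
      simp only [ν, smul_sub, smul_inv_smul₀ ht.1.ne']
      rw [show z t + (t • v - (z t - x)) = x + t • v by abel]
    simpa using hP.apply_add_smul_eq_of_apply_add_smul_eq hV hp ht.1 hbase
      (fun s hs => hball (hmem s hs)) (fun s hs => hM _ (hmem s hs)) 1 ⟨ht.2, le_rfl⟩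
  have hxv : x + v ∈ V := hball (by simpa [mem_closedBall, dist_eq_norm] using hvr.le)
  have hlim : Tendsto (fun t => p (z t + ν t)) (𝓝[>] 0) (𝓝 (p (x + v))) :=
    (hp.continuousOn.continuousAt (hV.mem_nhds hxv)).tendsto.comp (hz.add hν)
  exact tendsto_nhds_unique hlim (hz.congr' (hray.mono fun t h => h.symm))

end IsNearestPointProj

section Tube

variable {d : ℕ} {N V : Set (EuclideanSpace ℝ (Fin d))} {x₀ : EuclideanSpace ℝ (Fin d)}
  {R δ : ℝ}

theorem VRd_subset_closedBall : VRd N x₀ R δ ⊆ closedBall x₀ (R + δ) := by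
  rintro _ ⟨x, hx, v, -, hvδ, rfl⟩
  rw [mem_closedBall, dist_eq_norm, add_sub_right_comm]
  exact (norm_add_le _ _).trans (add_le_add (mem_closedBall_iff_norm.1 hx.1) hvδ.le)

theorem VRd_eq_setOf_infDist {p : EuclideanSpace ℝ (Fin d) → EuclideanSpace ℝ (Fin d)}
    (hP : IsNearestPointProj N V p) (hV : IsOpen V) (hp : DifferentiableOn ℝ p V)
    (hx₀ : x₀ ∈ N) (hR : 0 ≤ R) (hK : IsCompact (closedBall x₀ R ∩ N))
    (hball : closedBall x₀ (R + δ) ⊆ V)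
    (hnormal : ∀ x ∈ closedBall x₀ R ∩ N, ∀ v : EuclideanSpace ℝ (Fin d),
      (∀ w ∈ tangentConeAt ℝ N x, inner ℝ v w = (0 : ℝ)) → ‖v‖ < δ → p (x + v) = x) :
    VRd N x₀ R δ =
      {x | infDist x N = infDist x (closedBall x₀ R ∩ N) ∧ infDist x N < δ} := by
  ext y
  constructor
  · intro hy
    have hyV := hball (VRd_subset_closedBall hy)
    obtain ⟨x, hx, v, hv, hvδ, rfl⟩ := hy
    have hdist : infDist (x + v) N = ‖v‖ := by
      rw [← (hP _ hyV).2.1, hnormal x hx v hv hvδ, add_sub_cancel_left]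
    have hle : infDist (x + v) (closedBall x₀ R ∩ N) ≤ ‖v‖ := by
      simpa [dist_eq_norm] using infDist_le_dist_of_mem (x := x + v) hx
    refine ⟨le_antisymm ?_ (hdist ▸ hle), hdist ▸ hvδ⟩
    exact infDist_le_infDist_of_subset inter_subset_right ⟨x, hx⟩
  · rintro ⟨hdist, hδ⟩
    obtain ⟨x, hx, hxy⟩ := hK.exists_infDist_eq_dist ⟨x₀, mem_closedBall_self hR, hx₀⟩ y
    rw [← hdist, dist_eq_norm] at hxy
    have hmin : ∀ z ∈ N, ‖y - x‖ ≤ ‖y - z‖ := fun z hz => by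
      simpa [hxy, dist_eq_norm] using infDist_le_dist_of_mem (x := y) hz
    have hxV : x ∈ V :=
      hball (closedBall_subset_closedBall (by linarith [infDist_nonneg (x := y) (s := N)]) hx.1)
    refine ⟨x, hx, y - x, fun w hw => ?_, hxy ▸ hδ, by abel⟩
    exact hP.inner_sub_eq_zero_of_mem_tangentConeAt hV hp hx.2 hxV hmin hw

end Tube

theorem stmt_5_general (d : ℕ)
    (N : Set (EuclideanSpace ℝ (Fin d)))
    (x₀ : EuclideanSpace ℝ (Fin d)) (hx₀ : x₀ ∈ N)
    (hclosed : ∃ r₁ : ℝ, 0 < r₁ ∧ IsClosed (Metric.closedBall x₀ r₁ ∩ N))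
    (V : Set (EuclideanSpace ℝ (Fin d))) (hVopen : IsOpen V) (hx₀V : x₀ ∈ V)
    (p : EuclideanSpace ℝ (Fin d) → EuclideanSpace ℝ (Fin d))
    (hproj : AdmitsC1Proj N V p) :
    ∃ R₀ : ℝ, 0 < R₀ ∧ ∃ δ₀ : ℝ, 0 < δ₀ ∧
      ∀ R : ℝ, 0 < R → R ≤ R₀ → ∀ δ : ℝ, 0 < δ → δ ≤ δ₀ →
        closure (VRd N x₀ R δ) ⊆ V ∧
        VRd N x₀ R δ =
          {x | Metric.infDist x N = Metric.infDist x (Metric.closedBall x₀ R ∩ N) ∧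
            Metric.infDist x N < δ} ∧
        ∀ x ∈ Metric.closedBall x₀ R ∩ N, ∀ v : EuclideanSpace ℝ (Fin d),
          (∀ w ∈ tangentConeAt ℝ N x, inner ℝ v w = (0 : ℝ)) → ‖v‖ < δ → p (x + v) = x := by
  obtain ⟨hP, hp⟩ : IsNearestPointProj N V p ∧ ContDiffOn ℝ 1 p V := hproj
  have hdiff : DifferentiableOn ℝ p V := hp.differentiableOn one_ne_zero
  obtain ⟨r₁, hr₁, hr₁closed⟩ := hclosed
  obtain ⟨ρ, hρ, hρV⟩ := nhds_basis_closedBall.mem_iff.1 (hVopen.mem_nhds hx₀V)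
  obtain ⟨M, hM⟩ := (isCompact_closedBall x₀ ρ).exists_bound_of_continuousOn
    ((hp.continuousOn_fderiv_of_isOpen hVopen le_rfl).mono hρV)
  refine ⟨min ρ r₁ / 2, by positivity, min ρ r₁ / 2, by positivity,
    fun R hR hRle δ hδ hδle => ?_⟩
  have hball : closedBall x₀ (R + δ) ⊆ closedBall x₀ ρ :=
    closedBall_subset_closedBall (by linarith [min_le_left ρ r₁])
  have hnormal : ∀ x ∈ closedBall x₀ R ∩ N, ∀ v : EuclideanSpace ℝ (Fin d),
      (∀ w ∈ tangentConeAt ℝ N x, inner ℝ v w = (0 : ℝ)) → ‖v‖ < δ → p (x + v) = x := by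
    intro x hx v hv hvδ
    have hxδ : closedBall x δ ⊆ closedBall x₀ ρ :=
      (closedBall_subset_closedBall' (by linarith [mem_closedBall.1 hx.1])).trans hball
    exact hP.apply_add_of_forall_inner_eq_zero hVopen hdiff hx.2 (hxδ.trans hρV)
      (fun y hy => hM y (hxδ hy)) hv hvδ
  have hK : IsCompact (closedBall x₀ R ∩ N) := by
    rw [← inter_eq_left.2 (closedBall_subset_closedBall (show R ≤ r₁ by
      linarith [min_le_right ρ r₁])), inter_assoc]
    exact (isCompact_closedBall x₀ R).inter_right hr₁closed
  exact ⟨closure_minimal VRd_subset_closedBall isClosed_closedBall |>.trans (hball.trans hρV),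
    VRd_eq_setOf_infDist hP hVopen hdiff hx₀ hR.le hK (hball.trans hρV) hnormal, hnormal⟩

/-- **Local tubular neighbourhoods** (Proposition 2.5).  Let `N ⊆ ℝ^d` be a nonempty
`𝔡`-dimensional `C¹`-submanifold, `𝔡 ∈ {1,…,d−1}`, let `x₀ ∈ N`, assume some closed ball
around `x₀` intersects `N` in a closed set, and let `V*` be an open neighbourhood of `x₀`
admitting the `C¹` nearest-point projection `p` onto `N`.  Then there are `R₀, δ₀ ∈ (0,∞)`
such that for all `R ∈ (0,R₀]`, `δ ∈ (0,δ₀]`: the closure of `V_{R,δ}(x₀)` lies in `V*`;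
`V_{R,δ}(x₀)` coincides with `{x : dd(x,N) = dd(x, closedBall x₀ R ∩ N) < δ}`; and the
projection of `x + v` equals `x` for every `x ∈ closedBall x₀ R ∩ N` and normal `v`, `‖v‖ < δ`. -/
theorem stmt_5 (d 𝔡 : ℕ) (hd : 1 ≤ 𝔡) (h𝔡 : 𝔡 ≤ d - 1)
    (N : Set (EuclideanSpace ℝ (Fin d))) (hNne : N.Nonempty)
    (hN : IsC1Submanifold d 𝔡 N)
    (x₀ : EuclideanSpace ℝ (Fin d)) (hx₀ : x₀ ∈ N)
    (hclosed : ∃ r₁ : ℝ, 0 < r₁ ∧ IsClosed (Metric.closedBall x₀ r₁ ∩ N))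
    (V : Set (EuclideanSpace ℝ (Fin d))) (hVopen : IsOpen V) (hx₀V : x₀ ∈ V)
    (p : EuclideanSpace ℝ (Fin d) → EuclideanSpace ℝ (Fin d))
    (hproj : AdmitsC1Proj N V p) :
    ∃ R₀ : ℝ, 0 < R₀ ∧ ∃ δ₀ : ℝ, 0 < δ₀ ∧
      ∀ R : ℝ, 0 < R → R ≤ R₀ → ∀ δ : ℝ, 0 < δ → δ ≤ δ₀ →
        closure (VRd N x₀ R δ) ⊆ V ∧
        VRd N x₀ R δ =
          {x | Metric.infDist x N = Metric.infDist x (Metric.closedBall x₀ R ∩ N) ∧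
            Metric.infDist x N < δ} ∧
        ∀ x ∈ Metric.closedBall x₀ R ∩ N, ∀ v : EuclideanSpace ℝ (Fin d),
          (∀ w ∈ tangentConeAt ℝ N x, inner ℝ v w = (0 : ℝ)) → ‖v‖ < δ → p (x + v) = x :=
  stmt_5_general d N x₀ hx₀ hclosed V hVopen hx₀V p hproj
end

section
/- Let d ∈ ℕ, 𝔡 ∈ {0, 1, …, d−1}, let N ⊆ ℝ^d be a nonempty 𝔡-dimensional C^1-submanifold of ℝ^d, let x₀ ∈ N, and assume there exists r₁ > 0 such that (the closed ball of radius r₁ around x₀) ∩ N is a closed subset of ℝ^d. Then there exist R₀, δ₀ ∈ (0, ∞) such that for every R ∈ (0, R₀] and δ ∈ (0, δ₀] it holds that {x ∈ ℝ^d : dd(x, N) < δ and ‖x − x₀‖ ≤ R − δ} ⊆ V_{R,δ}(x₀). -/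
/-!
Take `R₀ = δ₀ = r₁ / 2`. If `dd(x, N) < δ` and `‖x - x₀‖ ≤ R - δ`, some point of `N` within `δ`
of `x` lies in the compact set `closedBall x₀ r₁ ∩ N`; a nearest point `y` of that compact set to
`x` is then within `δ` of `x`, hence inside `ball x₀ R`, so `y` is a local nearest point of `N`
to `x`. Near `y` the set `N` is a regular level set of some `Φ`, so by the Lagrange multiplier
theorem the derivative `2⟪y - x, ·⟫` of `‖x - ·‖²` at `y` vanishes on `ker DΦ(y)`, which contains
the tangent cone `T_y N`. Hence `x = y + (x - y)` with `x - y ⊥ T_y N` and `‖x - y‖ < δ`.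
-/

open Filter Topology Metric

theorem IsLocalExtrOn.apply_eq_zero_of_mem_ker {E F : Type*} [NormedAddCommGroup E]
    [NormedSpace ℝ E] [CompleteSpace E] [NormedAddCommGroup F] [NormedSpace ℝ F] [CompleteSpace F]
    {f : E → F} {φ : E → ℝ} {x₀ u : E}
    {f' : E →L[ℝ] F} {φ' : StrongDual ℝ E} (hextr : IsLocalExtrOn φ {x | f x = f x₀} x₀)
    (hf' : HasStrictFDerivAt f f' x₀) (hsurj : Function.Surjective f')
    (hφ' : HasStrictFDerivAt φ φ' x₀) (hu : f' u = 0) : φ' u = 0 := by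
  by_contra hφu
  -- moving along `u ∈ ker f'` adjusts `φ'` freely, so `(f', φ')` would be onto
  apply hextr.range_ne_top_of_hasStrictFDerivAt hf' hφ'
  rw [LinearMap.range_eq_top]
  rintro ⟨a, t⟩
  obtain ⟨e, rfl⟩ := hsurj a
  refine ⟨e + ((t - φ' e) / φ' u) • u, Prod.ext (by simp [hu]) ?_⟩
  change φ' (e + ((t - φ' e) / φ' u) • u) = t
  rw [map_add, map_smul, smul_eq_mul]
  field_simp
  ring

theorem tangentConeAt_subset_ker {𝕜 E F : Type*} [NontriviallyNormedField 𝕜]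
    [NormedAddCommGroup E] [NormedSpace 𝕜 E] [NormedAddCommGroup F] [NormedSpace 𝕜 F]
    {N W : Set E} {f : E → F} {f' : E →L[𝕜] F} {y : E} (hf : HasFDerivAt f f' y)
    (hW : W ∈ 𝓝 y) (hNW : N ∩ W ⊆ f ⁻¹' {f y}) :
    tangentConeAt 𝕜 N y ⊆ f'.ker := by
  intro w hw
  rw [← tangentConeAt_inter_nhds hW] at hw
  have hw' := (hf.hasFDerivWithinAt (s := N ∩ W)).mapsTo_tangent_cone hw
  have himage : f '' (N ∩ W) ⊆ {f y} := Set.image_subset_iff.2 hNW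
  have hsingle : ¬AccPt (f y) (𝓟 {f y}) := by
    rw [accPt_iff_frequently]
    exact fun h ↦ h.exists.elim fun _ h ↦ h.1 h.2
  exact tangentConeAt_subset_zero hsingle (tangentConeAt_mono himage hw')

theorem exists_isLocalMinOn_dist {E : Type*} [NormedAddCommGroup E] [ProperSpace E] {N : Set E}
    {x₀ x z : E} {r : ℝ} (hK : IsClosed (closedBall x₀ r ∩ N)) (hz : z ∈ N)
    (hr : dist x x₀ + dist x z < r) :
    ∃ y ∈ N, dist x y ≤ dist x z ∧ IsLocalMinOn (dist x) N y := by
  set K := closedBall x₀ r ∩ N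
  have hKc : IsCompact K :=
    (isCompact_closedBall x₀ r).of_isClosed_subset hK Set.inter_subset_left
  have hzK : z ∈ K := ⟨mem_closedBall.2 (by linarith [dist_triangle_left z x₀ x]), hz⟩
  obtain ⟨y, hyK, hymin⟩ :=
    hKc.exists_isMinOn ⟨z, hzK⟩ (continuous_const.dist continuous_id).continuousOn
  have hyz : dist x y ≤ dist x z := hymin hzK
  have hy : y ∈ ball x₀ r := mem_ball.2 (by linarith [dist_triangle_left y x₀ x])
  have hnhds : 𝓝[N] y = 𝓝[K] y := nhdsWithin_eq_nhdsWithin' (isOpen_ball.mem_nhds hy) <|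
    Set.ext fun w ↦ ⟨fun h ↦ ⟨⟨ball_subset_closedBall h.2, h.1⟩, h.2⟩, fun h ↦ ⟨h.1.2, h.2⟩⟩
  refine ⟨y, hyK.2, hyz, ?_⟩
  rw [IsLocalMinOn, hnhds]
  exact hymin.localize

theorem inner_sub_eq_zero_of_isLocalMinOn_dist {E F : Type*} [NormedAddCommGroup E]
    [InnerProductSpace ℝ E] [CompleteSpace E] [NormedAddCommGroup F] [NormedSpace ℝ F]
    [CompleteSpace F] {N W : Set E} {Φ : E → F} {Φ' : E →L[ℝ] F} {x y : E}
    (hΦ : HasStrictFDerivAt Φ Φ' y) (hsurj : Function.Surjective Φ') (hW : W ∈ 𝓝 y)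
    (hNW : N ∩ W = {z ∈ W | Φ z = Φ y}) (hmin : IsLocalMinOn (dist x) N y)
    {w : E} (hw : w ∈ tangentConeAt ℝ N y) : inner ℝ (x - y) w = 0 := by
  have hlevel : IsLocalMinOn (fun z ↦ ‖x - z‖ ^ 2) {z | Φ z = Φ y} y := by
    have hnhds : 𝓝[{z | Φ z = Φ y}] y = 𝓝[N] y :=
      nhdsWithin_eq_nhdsWithin' hW (by rw [hNW]; ext; simp [and_comm])
    rw [IsLocalMinOn, hnhds]
    refine Filter.Eventually.mono hmin fun z hz ↦ ?_
    simpa only [dist_eq_norm] using pow_le_pow_left₀ dist_nonneg hz 2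
  have hsq : HasStrictFDerivAt (fun z ↦ ‖x - z‖ ^ 2)
      ((2 • innerSL ℝ (x - y)).comp (0 - ContinuousLinearMap.id ℝ E)) y :=
    (hasStrictFDerivAt_norm_sq (x - y)).comp y
      ((hasStrictFDerivAt_const x y).sub (hasStrictFDerivAt_id y))
  have hker : Φ' w = 0 :=
    tangentConeAt_subset_ker hΦ.hasFDerivAt hW (fun z hz ↦ (hNW ▸ hz).2) hw
  have := IsLocalExtrOn.apply_eq_zero_of_mem_ker (.inl hlevel) hΦ hsurj hsq hker
  simpa [inner_sub_left] using this

theorem IsC1Submanifold.inner_eq_zero_of_isLocalMinOn_dist {d 𝔡 : ℕ}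
    {N : Set (EuclideanSpace ℝ (Fin d))} (hN : IsC1Submanifold d 𝔡 N)
    {x y : EuclideanSpace ℝ (Fin d)} (hy : y ∈ N) (hmin : IsLocalMinOn (dist x) N y) :
    ∀ w ∈ tangentConeAt ℝ N y, inner ℝ (x - y) w = (0 : ℝ) := by
  obtain ⟨W, Φ, hW, hyW, hΦ, hsurj, hNW⟩ := hN y hy
  have hΦy : Φ y = 0 := (hNW.subset ⟨hy, hyW⟩).2
  exact fun w ↦ inner_sub_eq_zero_of_isLocalMinOn_dist
    (hΦ.contDiffAt.hasStrictFDerivAt one_ne_zero) (hsurj y hyW) (hW.mem_nhds hyW)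
    (by rw [hNW, hΦy]) hmin

theorem stmt_6_general (d 𝔡 : ℕ)
    (N : Set (EuclideanSpace ℝ (Fin d)))
    (hN : IsC1Submanifold d 𝔡 N)
    (x₀ : EuclideanSpace ℝ (Fin d)) (hx₀ : x₀ ∈ N)
    (hclosed : ∃ r₁ : ℝ, 0 < r₁ ∧ IsClosed (Metric.closedBall x₀ r₁ ∩ N)) :
    ∃ R₀ : ℝ, 0 < R₀ ∧ ∃ δ₀ : ℝ, 0 < δ₀ ∧
      ∀ R : ℝ, 0 < R → R ≤ R₀ → ∀ δ : ℝ, 0 < δ → δ ≤ δ₀ →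
        {x : EuclideanSpace ℝ (Fin d) |
            Metric.infDist x N < δ ∧ ‖x - x₀‖ ≤ R - δ} ⊆ VRd N x₀ R δ := by
  obtain ⟨r, hr, hK⟩ := hclosed
  refine ⟨r / 2, by positivity, r / 2, by positivity, fun R _ hRr δ _ _ x ⟨hxN, hxx₀⟩ ↦ ?_⟩
  rw [← dist_eq_norm] at hxx₀
  obtain ⟨z, hz, hxz⟩ := (infDist_lt_iff ⟨x₀, hx₀⟩).1 hxN
  obtain ⟨y, hy, hyz, hmin⟩ := exists_isLocalMinOn_dist hK hz (by linarith)
  refine ⟨y, ⟨mem_closedBall.2 ?_, hy⟩, x - y, hN.inner_eq_zero_of_isLocalMinOn_dist hy hmin,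
    by rw [← dist_eq_norm]; linarith, by abel⟩
  linarith [dist_triangle_left y x₀ x]

/-- **Sufficient condition for membership in a tubular neighbourhood** (Lemma 5.7).  Let
`N ⊆ ℝ^d` be a nonempty `𝔡`-dimensional `C¹`-submanifold, `𝔡 ∈ {0,1,…,d−1}`, let `x₀ ∈ N`,
and assume that some closed ball around `x₀` intersects `N` in a closed set.  Then there are
`R₀, δ₀ ∈ (0,∞)` such that for every `R ∈ (0,R₀]` and `δ ∈ (0,δ₀]` it holds that
`{x : dd(x,N) < δ and ‖x − x₀‖ ≤ R − δ} ⊆ V_{R,δ}(x₀)`. -/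
theorem stmt_6 (d 𝔡 : ℕ) (hd : 1 ≤ d) (h𝔡 : 𝔡 ≤ d - 1)
    (N : Set (EuclideanSpace ℝ (Fin d))) (hNne : N.Nonempty)
    (hN : IsC1Submanifold d 𝔡 N)
    (x₀ : EuclideanSpace ℝ (Fin d)) (hx₀ : x₀ ∈ N)
    (hclosed : ∃ r₁ : ℝ, 0 < r₁ ∧ IsClosed (Metric.closedBall x₀ r₁ ∩ N)) :
    ∃ R₀ : ℝ, 0 < R₀ ∧ ∃ δ₀ : ℝ, 0 < δ₀ ∧
      ∀ R : ℝ, 0 < R → R ≤ R₀ → ∀ δ : ℝ, 0 < δ → δ ≤ δ₀ →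
        {x : EuclideanSpace ℝ (Fin d) |
            Metric.infDist x N < δ ∧ ‖x - x₀‖ ≤ R - δ} ⊆ VRd N x₀ R δ :=
  stmt_6_general d 𝔡 N hN x₀ hx₀ hclosed
end

section
/- Let φ : [0,1] → ℝ be measurable with ∫₀¹ φ(x)² dx < ∞, let f : ℝ⁴ → ℝ be defined by f(θ₁,θ₂,θ₃,θ₄) = ∫₀¹ (θ₃θ₁x + θ₃θ₂ + θ₄ − φ(x))² dx, let r₀ := ∫₀¹ φ(x) dx and r₁ := ∫₀¹ x·φ(x) dx, let U := {θ ∈ ℝ⁴ : θ₃ ≠ 0}, and let 𝓜 := {θ ∈ ℝ⁴ : f(θ) = inf_{ϑ∈ℝ⁴} f(ϑ)}. Then: (i) inf_{θ∈ℝ⁴} f(θ) = inf_{θ∈U} f(θ); (ii) 𝓜 ∩ U = {θ ∈ ℝ⁴ : θ₃ ≠ 0, θ₁θ₃ = 12r₁ − 6r₀, and θ₄ = 4r₀ − 6r₁ − θ₂θ₃}, and this set is nonempty; and (iii) f is twice continuously differentiable on ℝ⁴ and for every θ ∈ 𝓜 ∩ U the Hessian Hess f(θ) has rank 2. -/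
/-!
Write `θ₁, …, θ₄` for `θ 0, …, θ 3`. The network realises `x ↦ a x + b` with slope
`a = θ₁θ₃` and offset `b = θ₂θ₃ + θ₄`, so `f θ = q (a, b)` for the quadratic
`q (a, b) = ∫₀¹ (a x + b - φ x)² dx = a²/3 + ab + b² - 2 r₁ a - 2 r₀ b + ∫₀¹ φ²`.
Completing the square, `q` has the unique minimiser `(12 r₁ - 6 r₀, 4 r₀ - 6 r₁)`, which is
realised with `θ₃ = 1`; this gives the infimum and the description of `𝓜 ∩ U`.
At a minimiser `∇q = 0`, so the chain rule leaves `Hess f θ = Jᵀ (∇²q) J` with `J` the Jacobian of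
`θ ↦ (a, b)`. Its rows `∇a = (θ₃, 0, θ₁, 0)` and `∇b = (0, θ₃, θ₂, 1)` are independent when
`θ₃ ≠ 0`, and `∇²q` is invertible, so the Hessian has range `span {∇a, ∇b}`.
-/

open MeasureTheory

open InnerProductSpace

local notation "ℝ⁴" => EuclideanSpace ℝ (Fin 4)

noncomputable def affineLoss (r₀ r₁ c a b : ℝ) : ℝ :=
  a ^ 2 / 3 + a * b + b ^ 2 - 2 * r₁ * a - 2 * r₀ * b + c

theorem integral_Icc_affine_sq (a b : ℝ) :
    ∫ x in Set.Icc (0 : ℝ) 1, (a * x + b) ^ 2 = a ^ 2 / 3 + a * b + b ^ 2 := by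
  have hexpand (x : ℝ) : (a * x + b) ^ 2 = a ^ 2 * x ^ 2 + 2 * a * b * x + b ^ 2 := by ring
  have hint (p : ℝ → ℝ) (hp : Continuous p) : IntervalIntegrable p volume 0 1 :=
    hp.intervalIntegrable 0 1
  simp_rw [integral_Icc_eq_integral_Ioc, ← intervalIntegral.integral_of_le zero_le_one, hexpand]
  rw [intervalIntegral.integral_add (hint _ (by fun_prop)) (hint _ (by fun_prop)),
    intervalIntegral.integral_add (hint _ (by fun_prop)) (hint _ (by fun_prop)),
    intervalIntegral.integral_const_mul, intervalIntegral.integral_const_mul]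
  simp only [integral_pow, integral_id, intervalIntegral.integral_const, smul_eq_mul]
  ring

theorem integral_Icc_affine_sub_sq {φ : ℝ → ℝ}
    (hφ : AEStronglyMeasurable φ (volume.restrict (Set.Icc 0 1)))
    (hφ2 : IntegrableOn (fun x => φ x ^ 2) (Set.Icc 0 1)) (a b : ℝ) :
    ∫ x in Set.Icc (0 : ℝ) 1, (a * x + b - φ x) ^ 2 =
      affineLoss (∫ x in Set.Icc (0 : ℝ) 1, φ x) (∫ x in Set.Icc (0 : ℝ) 1, x * φ x)
        (∫ x in Set.Icc (0 : ℝ) 1, φ x ^ 2) a b := by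
  have hφ1 : IntegrableOn φ (Set.Icc 0 1) :=
    ((memLp_two_iff_integrable_sq hφ).2 hφ2).integrable one_le_two
  have hxφ : IntegrableOn (fun x => x * φ x) (Set.Icc 0 1) :=
    hφ1.continuousOn_mul continuousOn_id isCompact_Icc
  have hcross : IntegrableOn (fun x => 2 * a * (x * φ x) + 2 * b * φ x) (Set.Icc 0 1) :=
    (hxφ.const_mul _).add (hφ1.const_mul _)
  have hpoly : IntegrableOn (fun x : ℝ => (a * x + b) ^ 2) (Set.Icc 0 1) :=
    (by fun_prop : Continuous fun x : ℝ => (a * x + b) ^ 2).integrableOn_Icc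
  have hexpand (x : ℝ) : (a * x + b - φ x) ^ 2 =
      (a * x + b) ^ 2 - (2 * a * (x * φ x) + 2 * b * φ x) + φ x ^ 2 := by ring
  simp_rw [hexpand]
  rw [integral_add (by exact hpoly.sub hcross) hφ2, integral_sub hpoly hcross,
    integral_add (hxφ.const_mul _) (hφ1.const_mul _), integral_const_mul, integral_const_mul,
    integral_Icc_affine_sq, affineLoss]
  ring

theorem affineLoss_eq_add_sq (r₀ r₁ c a b : ℝ) :
    affineLoss r₀ r₁ c a b = affineLoss r₀ r₁ c (12 * r₁ - 6 * r₀) (4 * r₀ - 6 * r₁)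
      + (2 * (a - (12 * r₁ - 6 * r₀)) + 3 * (b - (4 * r₀ - 6 * r₁))) ^ 2 / 12
      + (b - (4 * r₀ - 6 * r₁)) ^ 2 / 4 := by
  unfold affineLoss; ring

theorem affineLoss_min_le (r₀ r₁ c a b : ℝ) :
    affineLoss r₀ r₁ c (12 * r₁ - 6 * r₀) (4 * r₀ - 6 * r₁) ≤ affineLoss r₀ r₁ c a b := by
  rw [affineLoss_eq_add_sq r₀ r₁ c a b, add_assoc]
  exact le_add_of_nonneg_right (by positivity)

theorem affineLoss_eq_min_iff {r₀ r₁ c a b : ℝ} :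
    affineLoss r₀ r₁ c a b = affineLoss r₀ r₁ c (12 * r₁ - 6 * r₀) (4 * r₀ - 6 * r₁) ↔
      a = 12 * r₁ - 6 * r₀ ∧ b = 4 * r₀ - 6 * r₁ := by
  refine ⟨fun h => ?_, fun ⟨ha, hb⟩ => ha ▸ hb ▸ rfl⟩
  set p := 2 * (a - (12 * r₁ - 6 * r₀)) + 3 * (b - (4 * r₀ - 6 * r₁))
  set q := b - (4 * r₀ - 6 * r₁)
  rw [affineLoss_eq_add_sq r₀ r₁ c a b] at h
  have hp : p = 0 := pow_eq_zero_iff two_ne_zero |>.1 <| by nlinarith [sq_nonneg p, sq_nonneg q]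
  have hq : q = 0 := pow_eq_zero_iff two_ne_zero |>.1 <| by nlinarith [sq_nonneg p, sq_nonneg q]
  constructor <;> linarith

theorem HasGradientAt.affineLoss {F : Type*} [NormedAddCommGroup F] [InnerProductSpace ℝ F]
    [CompleteSpace F] {g₁ g₂ : F → ℝ} {u w θ : F} (r₀ r₁ c : ℝ)
    (h₁ : HasGradientAt g₁ u θ) (h₂ : HasGradientAt g₂ w θ) :
    HasGradientAt (fun θ => _root_.affineLoss r₀ r₁ c (g₁ θ) (g₂ θ))
      ((2 / 3 * g₁ θ + g₂ θ - 2 * r₁) • u + (g₁ θ + 2 * g₂ θ - 2 * r₀) • w) θ := by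
  rw [hasGradientAt_iff_hasFDerivAt] at *
  simp only [_root_.affineLoss, div_eq_mul_inv]
  refine (((((h₁.pow 2).mul_const 3⁻¹).add (h₁.mul h₂)).add (h₂.pow 2)).sub (h₁.const_mul _)
    |>.sub (h₂.const_mul _) |>.add_const c).congr_fderiv ?_
  ext v
  simp only [nsmul_eq_mul, Nat.cast_ofNat, sub_apply, add_apply, smul_apply,
    toDual_apply_apply, smul_eq_mul, map_add, map_smul]
  ring

theorem range_smulRight_add_smulRight {𝕜 E F : Type*} [Field 𝕜] [TopologicalSpace 𝕜]
    [AddCommGroup E] [Module 𝕜 E] [TopologicalSpace E] [AddCommGroup F] [Module 𝕜 F]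
    [TopologicalSpace F] [ContinuousSMul 𝕜 F] [ContinuousAdd F]
    (ℓ₁ ℓ₂ : E →L[𝕜] 𝕜) (u w : F) (h : ∀ s t, ∃ v, ℓ₁ v = s ∧ ℓ₂ v = t) :
    LinearMap.range ((ℓ₁.smulRight u + ℓ₂.smulRight w : E →L[𝕜] F) : E →ₗ[𝕜] F) =
      Submodule.span 𝕜 {u, w} := by
  ext x
  simp only [LinearMap.mem_range, Submodule.mem_span_pair, ContinuousLinearMap.coe_coe,
    add_apply, ContinuousLinearMap.smulRight_apply]
  constructor
  · rintro ⟨v, rfl⟩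
    exact ⟨ℓ₁ v, ℓ₂ v, rfl⟩
  · rintro ⟨s, t, rfl⟩
    obtain ⟨v, rfl, rfl⟩ := h s t
    exact ⟨v, rfl⟩

theorem finrank_span_pair {K V : Type*} [DivisionRing K] [AddCommGroup V] [Module K V] {u w : V}
    (h : LinearIndependent K ![u, w]) : Module.finrank K (Submodule.span K {u, w}) = 2 := by
  rw [← Matrix.range_cons_cons_empty, finrank_span_eq_card h, Fintype.card_fin]

theorem ciInf_eq_of_forall_ge_of_eq {ι α : Type*} [ConditionallyCompleteLattice α] {g : ι → α}
    {m : α} (hle : ∀ i, m ≤ g i) (i₀ : ι) (h : g i₀ = m) : ⨅ i, g i = m :=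
  IsLeast.csInf_eq ⟨⟨i₀, h⟩, Set.forall_mem_range.2 hle⟩

def netSlope (θ : ℝ⁴) : ℝ := θ 0 * θ 2

def netOffset (θ : ℝ⁴) : ℝ := θ 1 * θ 2 + θ 3

noncomputable def netSlopeGrad (θ : ℝ⁴) : ℝ⁴ :=
  θ 2 • EuclideanSpace.single 0 1 + θ 0 • EuclideanSpace.single 2 1

noncomputable def netOffsetGrad (θ : ℝ⁴) : ℝ⁴ :=
  θ 2 • EuclideanSpace.single 1 1 + θ 1 • EuclideanSpace.single 2 1 + EuclideanSpace.single 3 1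

theorem integral_Icc_net_sub_sq {φ : ℝ → ℝ}
    (hφ : AEStronglyMeasurable φ (volume.restrict (Set.Icc 0 1)))
    (hφ2 : IntegrableOn (fun x => φ x ^ 2) (Set.Icc 0 1)) (θ : ℝ⁴) :
    ∫ x in Set.Icc (0 : ℝ) 1, (θ 2 * θ 0 * x + θ 2 * θ 1 + θ 3 - φ x) ^ 2 =
      affineLoss (∫ x in Set.Icc (0 : ℝ) 1, φ x) (∫ x in Set.Icc (0 : ℝ) 1, x * φ x)
        (∫ x in Set.Icc (0 : ℝ) 1, φ x ^ 2) (netSlope θ) (netOffset θ) := by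
  rw [← integral_Icc_affine_sub_sq hφ hφ2]
  congr with x
  unfold netSlope netOffset
  ring

theorem affineLoss_net_eq_min_iff {r₀ r₁ c : ℝ} {θ : ℝ⁴} :
    affineLoss r₀ r₁ c (netSlope θ) (netOffset θ) =
        affineLoss r₀ r₁ c (12 * r₁ - 6 * r₀) (4 * r₀ - 6 * r₁) ↔
      θ 0 * θ 2 = 12 * r₁ - 6 * r₀ ∧ θ 3 = 4 * r₀ - 6 * r₁ - θ 1 * θ 2 := by
  rw [affineLoss_eq_min_iff, netSlope, netOffset]
  exact and_congr_right fun _ => eq_sub_iff_add_eq'.symm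

theorem inner_netSlopeGrad (θ v : ℝ⁴) : ⟪netSlopeGrad θ, v⟫_ℝ = θ 2 * v 0 + θ 0 * v 2 := by
  simp [netSlopeGrad, inner_add_left, inner_smul_left, EuclideanSpace.inner_single_left]

theorem inner_netOffsetGrad (θ v : ℝ⁴) :
    ⟪netOffsetGrad θ, v⟫_ℝ = θ 2 * v 1 + θ 1 * v 2 + v 3 := by
  simp [netOffsetGrad, inner_add_left, inner_smul_left, EuclideanSpace.inner_single_left]

theorem hasGradientAt_netSlope (θ : ℝ⁴) : HasGradientAt netSlope (netSlopeGrad θ) θ := by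
  have hc (i : Fin 4) := PiLp.hasFDerivAt_apply (𝕜 := ℝ) 2 θ i
  rw [hasGradientAt_iff_hasFDerivAt]
  refine ((hc 0).mul (hc 2)).congr_fderiv ?_
  ext v
  simp only [toDual_apply_apply, inner_netSlopeGrad, add_apply, smul_apply, PiLp.proj_apply,
    smul_eq_mul]
  ring

theorem hasGradientAt_netOffset (θ : ℝ⁴) : HasGradientAt netOffset (netOffsetGrad θ) θ := by
  have hc (i : Fin 4) := PiLp.hasFDerivAt_apply (𝕜 := ℝ) 2 θ i
  rw [hasGradientAt_iff_hasFDerivAt]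
  refine (((hc 1).mul (hc 2)).add (hc 3)).congr_fderiv ?_
  ext v
  simp only [toDual_apply_apply, inner_netOffsetGrad, add_apply, smul_apply, PiLp.proj_apply,
    smul_eq_mul]
  ring

theorem contDiff_affineLoss_net (r₀ r₁ c : ℝ) :
    ContDiff ℝ 2 fun θ => affineLoss r₀ r₁ c (netSlope θ) (netOffset θ) := by
  unfold affineLoss netSlope netOffset
  fun_prop

theorem hess_affineLoss_net {r₀ r₁ c : ℝ} {θ : ℝ⁴}
    (hA : 2 / 3 * netSlope θ + netOffset θ - 2 * r₁ = 0)
    (hB : netSlope θ + 2 * netOffset θ - 2 * r₀ = 0) :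
    hess (fun θ => affineLoss r₀ r₁ c (netSlope θ) (netOffset θ)) θ =
      (toDual ℝ ℝ⁴ ((2 / 3 : ℝ) • netSlopeGrad θ + netOffsetGrad θ)).smulRight (netSlopeGrad θ) +
      (toDual ℝ ℝ⁴ (netSlopeGrad θ + (2 : ℝ) • netOffsetGrad θ)).smulRight (netOffsetGrad θ) := by
  have hgrad : gradient (fun θ => affineLoss r₀ r₁ c (netSlope θ) (netOffset θ)) = fun θ =>
      (2 / 3 * netSlope θ + netOffset θ - 2 * r₁) • netSlopeGrad θ +
      (netSlope θ + 2 * netOffset θ - 2 * r₀) • netOffsetGrad θ :=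
    gradient_eq fun θ => (hasGradientAt_netSlope θ).affineLoss r₀ r₁ c (hasGradientAt_netOffset θ)
  have hS := (hasGradientAt_iff_hasFDerivAt.1 (hasGradientAt_netSlope θ))
  have hO := (hasGradientAt_iff_hasFDerivAt.1 (hasGradientAt_netOffset θ))
  have hdA := ((hS.const_mul (2 / 3)).add hO).sub_const (2 * r₁)
  have hdB := (hS.add (hO.const_mul 2)).sub_const (2 * r₀)
  have hu : DifferentiableAt ℝ netSlopeGrad θ := by unfold netSlopeGrad; fun_prop
  have hw : DifferentiableAt ℝ netOffsetGrad θ := by unfold netOffsetGrad; fun_prop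
  rw [hess, hgrad]
  refine ((hdA.smul hu.hasFDerivAt).add (hdB.smul hw.hasFDerivAt)).fderiv.trans ?_
  simp [hA, hB]

-- The witness has `⟪∇a, v⟫ = 6 s - 3 t` and `⟪∇b, v⟫ = 2 t - 3 s`, which `∇²q` maps to `(s, t)`.
theorem exists_toDual_netGrad_eq {θ : ℝ⁴} (hθ : θ 2 ≠ 0) (s t : ℝ) :
    ∃ v, toDual ℝ ℝ⁴ ((2 / 3 : ℝ) • netSlopeGrad θ + netOffsetGrad θ) v = s ∧
      toDual ℝ ℝ⁴ (netSlopeGrad θ + (2 : ℝ) • netOffsetGrad θ) v = t := by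
  refine ⟨((6 * s - 3 * t) / θ 2) • EuclideanSpace.single 0 1 +
    (2 * t - 3 * s) • EuclideanSpace.single 3 1, ?_, ?_⟩ <;>
  · simp only [map_add, map_smul, add_apply, smul_apply, toDual_apply_apply, inner_netSlopeGrad,
      inner_netOffsetGrad, PiLp.single_apply, Fin.reduceEq, reduceIte, mul_one, mul_zero, add_zero,
      zero_add, smul_eq_mul]
    field_simp
    ring

theorem linearIndependent_netSlopeGrad_netOffsetGrad {θ : ℝ⁴} (hθ : θ 2 ≠ 0) :
    LinearIndependent ℝ ![netSlopeGrad θ, netOffsetGrad θ] := by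
  refine LinearIndependent.pair_iff.2 fun s t hst => ?_
  have ht : t = 0 := by simpa [netSlopeGrad, netOffsetGrad] using congrArg (· 3) hst
  have hs : s = 0 ∨ θ 2 = 0 := by simpa [netSlopeGrad, netOffsetGrad] using congrArg (· 0) hst
  exact ⟨hs.resolve_right hθ, ht⟩

/-- **A four-parameter affine-linear network with linear activation** (Proposition 7.1).  For a
square-integrable target `φ` and the objective
`f(θ) = ∫₀¹ (θ₃θ₁x + θ₃θ₂ + θ₄ − φ(x))² dx`, with `r₀ = ∫₀¹ φ`, `r₁ = ∫₀¹ x·φ(x) dx`,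
`U = {θ₃ ≠ 0}` and `𝓜` the set of global minima: the infimum of `f` over `ℝ⁴` equals the
infimum over `U`; `𝓜 ∩ U` is the nonempty set
`{θ : θ₃ ≠ 0, θ₁θ₃ = 12r₁ − 6r₀, θ₄ = 4r₀ − 6r₁ − θ₂θ₃}`; and `f` is `C²` with Hessian of
rank `2` at every point of `𝓜 ∩ U`. -/
theorem stmt_18 (φ : ℝ → ℝ) (hφmeas : Measurable φ)
    (hφL2 : IntegrableOn (fun x => φ x ^ 2) (Set.Icc (0 : ℝ) 1) volume)
    (f : EuclideanSpace ℝ (Fin 4) → ℝ)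
    (hf : ∀ θ : EuclideanSpace ℝ (Fin 4),
      f θ = ∫ x in Set.Icc (0 : ℝ) 1, (θ 2 * θ 0 * x + θ 2 * θ 1 + θ 3 - φ x) ^ 2)
    (r₀ r₁ : ℝ)
    (hr₀ : r₀ = ∫ x in Set.Icc (0 : ℝ) 1, φ x)
    (hr₁ : r₁ = ∫ x in Set.Icc (0 : ℝ) 1, x * φ x)
    (U : Set (EuclideanSpace ℝ (Fin 4)))
    (hU : U = {θ : EuclideanSpace ℝ (Fin 4) | θ 2 ≠ 0})
    (𝓜 : Set (EuclideanSpace ℝ (Fin 4)))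
    (h𝓜 : 𝓜 = {θ | f θ = ⨅ ϑ, f ϑ}) :
    ((⨅ θ : EuclideanSpace ℝ (Fin 4), f θ) = ⨅ θ : U, f θ) ∧
    (𝓜 ∩ U = {θ : EuclideanSpace ℝ (Fin 4) |
        θ 2 ≠ 0 ∧ θ 0 * θ 2 = 12 * r₁ - 6 * r₀ ∧ θ 3 = 4 * r₀ - 6 * r₁ - θ 1 * θ 2} ∧
      (𝓜 ∩ U).Nonempty) ∧
    (ContDiff ℝ 2 f ∧
      ∀ θ ∈ 𝓜 ∩ U, Module.finrank ℝ (LinearMap.range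
        (hess f θ : EuclideanSpace ℝ (Fin 4) →ₗ[ℝ] EuclideanSpace ℝ (Fin 4))) = 2) := by
  set c := ∫ x in Set.Icc (0 : ℝ) 1, φ x ^ 2
  have hfθ (θ : ℝ⁴) : f θ = affineLoss r₀ r₁ c (netSlope θ) (netOffset θ) := by
    rw [hf, hr₀, hr₁, integral_Icc_net_sub_sq hφmeas.aestronglyMeasurable hφL2]
  have hf' : f = fun θ => affineLoss r₀ r₁ c (netSlope θ) (netOffset θ) := funext hfθ
  set m := affineLoss r₀ r₁ c (12 * r₁ - 6 * r₀) (4 * r₀ - 6 * r₁)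
  set θmin : ℝ⁴ := !₂[12 * r₁ - 6 * r₀, 0, 1, 4 * r₀ - 6 * r₁]
  have hθmin : f θmin = m := by simp [hfθ, θmin, m, netSlope, netOffset]
  have hθminU : θmin ∈ U := by simp [hU, θmin]
  have hle (θ : ℝ⁴) : m ≤ f θ := hfθ θ ▸ affineLoss_min_le ..
  have hinf : ⨅ θ, f θ = m := ciInf_eq_of_forall_ge_of_eq hle θmin hθmin
  have hinfU : ⨅ θ : U, f θ = m :=
    ciInf_eq_of_forall_ge_of_eq (fun θ => hle θ) ⟨θmin, hθminU⟩ hθmin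
  have hMU : 𝓜 ∩ U = {θ : ℝ⁴ |
      θ 2 ≠ 0 ∧ θ 0 * θ 2 = 12 * r₁ - 6 * r₀ ∧ θ 3 = 4 * r₀ - 6 * r₁ - θ 1 * θ 2} := by
    ext θ
    rw [Set.mem_inter_iff, h𝓜, hU, Set.mem_ofPred_eq, Set.mem_ofPred_eq, Set.mem_ofPred_eq, hinf,
      hfθ, affineLoss_net_eq_min_iff, and_comm]
  refine ⟨hinf.trans hinfU.symm, ⟨hMU, θmin, by rw [h𝓜, Set.mem_ofPred_eq, hinf, hθmin], hθminU⟩,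
    hf' ▸ contDiff_affineLoss_net r₀ r₁ c, ?_⟩
  rw [hMU]
  rintro θ ⟨h2, ha, h3⟩
  rw [hf', hess_affineLoss_net (by unfold netSlope netOffset; rw [ha, h3]; ring)
      (by unfold netSlope netOffset; rw [ha, h3]; ring),
    range_smulRight_add_smulRight _ _ _ _ (exists_toDual_netGrad_eq h2 ·),
    finrank_span_pair (linearIndependent_netSlopeGrad_netOffsetGrad h2)]
end

section
/- Let f : ℝ² → ℝ be defined by f(θ₁,θ₂) = ∫₀¹ (θ₂·max(θ₁x, 0) − sin(x))² dx, let U := {θ ∈ ℝ² : θ₁ > 0 and θ₂ > 0}, and let 𝓜 := {θ ∈ ℝ² : f(θ) = inf_{ϑ∈ℝ²} f(ϑ)}. Then: (i) 𝓜 ∩ U = {θ ∈ ℝ² : θ₁ > 0, θ₂ > 0, and θ₁θ₂ = 3·(sin(1) − cos(1))}, and this set is nonempty; and (ii) f is twice continuously differentiable on U and for every θ ∈ 𝓜 ∩ U the Hessian Hess f(θ) has rank 1. -/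
open MeasureTheory

/-! For `x ∈ [0, 1]` we have `θ₂ · max (θ₁ x) 0 = c x` with `c = max θ₁ 0 · θ₂`, so
`f θ = L c` where `L c = ∫₀¹ (c x - sin x)²` is the explicit quadratic `(c - c⋆)² / 3 + const`,
`c⋆ = 3 (sin 1 - cos 1) > 0`. Hence the minimisers are the points with `max θ₁ 0 · θ₂ = c⋆`,
i.e. the branch `θ₁ θ₂ = c⋆` of a hyperbola in the open quadrant. Near such a point `f = L ∘ p`
with `p θ = θ₁ θ₂`; since `L' c⋆ = 0`, the Hessian there is `L'' c⋆ · ∇p ⊗ ∇p`, of rank one. -/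

section

open Real Set InnerProductSpace Filter Topology

section RankOneHessian

variable {E : Type*} [NormedAddCommGroup E] [InnerProductSpace ℝ E]

theorem finrank_range_smul_rankOne_self {c : ℝ} {v : E} (hc : c ≠ 0) (hv : v ≠ 0) :
    Module.finrank ℝ (LinearMap.range (c • rankOne ℝ v v : E →L[ℝ] E).toLinearMap) = 1 := by
  have := rank_rankOne (𝕜 := ℝ) (smul_ne_zero hc hv) hv
  rw [map_smul] at this
  exact Module.rank_eq_one_iff_finrank_eq_one.mp this

variable [CompleteSpace E]

theorem HasDerivAt.comp_hasGradientAt {g : ℝ → ℝ} {g' : ℝ} {p : E → ℝ} {p' x : E}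
    (hg : HasDerivAt g g' (p x)) (hp : HasGradientAt p p' x) :
    HasGradientAt (g ∘ p) (g' • p') x := by
  rw [hasGradientAt_iff_hasFDerivAt] at hp ⊢
  simpa [map_smulₛₗ, mul_comm] using hg.comp_hasFDerivAt x hp

theorem hasFDerivAt_gradient_comp_of_deriv_eq_zero {g g' : ℝ → ℝ} {g'' : ℝ} {p : E → ℝ}
    {gradp : E → E} {P : E →L[ℝ] E} {x : E}
    (hg : ∀ t, HasDerivAt g (g' t) t) (hg' : HasDerivAt g' g'' (p x))
    (hp : ∀ y, HasGradientAt p (gradp y) y) (hP : HasFDerivAt gradp P x) (hcrit : g' (p x) = 0) :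
    HasFDerivAt (gradient (g ∘ p)) (g'' • rankOne ℝ (gradp x) (gradp x)) x := by
  have hgrad : gradient (g ∘ p) = g' ∘ p • gradp :=
    funext fun y => ((hg (p y)).comp_hasGradientAt (hp y)).gradient
  have hP' := (hg'.comp_hasFDerivAt x (hasGradientAt_iff_hasFDerivAt.mp (hp x))).smul hP
  rw [Function.comp_apply, hcrit, zero_smul, zero_add] at hP'
  rw [hgrad]
  convert hP' using 1
  ext v
  simp [mul_smul]

end RankOneHessian

local notation "c⋆" => 3 * (sin 1 - cos 1)

noncomputable def linearFitError (c : ℝ) : ℝ := ∫ x in Icc (0 : ℝ) 1, (c * x - sin x) ^ 2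

theorem linearFitError_eq (c : ℝ) :
    linearFitError c = (c - c⋆) ^ 2 / 3 + (1 / 2 - sin 1 * cos 1 / 2 - c⋆ ^ 2 / 3) := by
  have hF : ∀ x, HasDerivAt
      (fun x => c ^ 2 / 3 * x ^ 3 - 2 * c * (sin x - x * cos x) + (x - sin x * cos x) / 2)
      ((c * x - sin x) ^ 2) x := by
    intro x
    refine ((((hasDerivAt_pow 3 x).const_mul (c ^ 2 / 3)).sub
      (((hasDerivAt_sin x).sub (hasDerivAt_id' x |>.mul (hasDerivAt_cos x))).const_mul (2 * c))).add
      (((hasDerivAt_id' x).sub ((hasDerivAt_sin x).mul (hasDerivAt_cos x))).div_const 2)).congr_deriv ?_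
    push_cast
    linear_combination (-1 / 2 : ℝ) * sin_sq_add_cos_sq x
  rw [linearFitError, integral_Icc_eq_integral_Ioc, ← intervalIntegral.integral_of_le zero_le_one,
    intervalIntegral.integral_eq_sub_of_hasDerivAt (fun x _ => hF x)
      (by apply Continuous.intervalIntegrable; fun_prop)]
  simp only [sin_zero, cos_zero]
  ring

theorem hasDerivAt_linearFitError (c : ℝ) :
    HasDerivAt linearFitError (2 * (c - c⋆) / 3) c := by
  rw [funext linearFitError_eq]
  simpa using (((hasDerivAt_id c).sub_const c⋆).pow 2).div_const 3
    |>.add_const (1 / 2 - sin 1 * cos 1 / 2 - c⋆ ^ 2 / 3)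

theorem contDiff_linearFitError {n : WithTop ℕ∞} : ContDiff ℝ n linearFitError := by
  rw [funext linearFitError_eq]
  fun_prop

theorem linearFitError_le (c : ℝ) : linearFitError c⋆ ≤ linearFitError c := by
  rw [linearFitError_eq, linearFitError_eq]
  nlinarith [sq_nonneg (c - c⋆)]

theorem linearFitError_eq_iff {c : ℝ} : linearFitError c = linearFitError c⋆ ↔ c = c⋆ := by
  simp [linearFitError_eq, sub_eq_zero]

theorem sin_one_sub_cos_one_pos : 0 < sin 1 - cos 1 := by
  linarith [sin_gt_sub_cube one_pos, cos_one_le]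

theorem integral_relu_sub_sin_sq (a w : ℝ) :
    ∫ x in Icc (0 : ℝ) 1, (w * max (a * x) 0 - sin x) ^ 2 = linearFitError (max a 0 * w) :=
  setIntegral_congr_fun measurableSet_Icc fun x hx => by
    rw [show max (a * x) 0 = max a 0 * x by rw [max_mul_of_nonneg _ _ hx.1, zero_mul]]
    ring

theorem max_mul_eq_iff_of_pos {a w c : ℝ} (hc : 0 < c) :
    max a 0 * w = c ↔ 0 < a ∧ 0 < w ∧ a * w = c := by
  constructor
  · intro h
    have ha : 0 < a := by
      by_contra! ha
      rw [max_eq_right ha, zero_mul] at h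
      exact hc.ne h
    rw [max_eq_left ha.le] at h
    exact ⟨ha, pos_of_mul_pos_right (h ▸ hc) ha.le, h⟩
  · rintro ⟨ha, -, rfl⟩
    rw [max_eq_left ha.le]

local notation "ℝ²" => EuclideanSpace ℝ (Fin 2)

noncomputable def swapCoords : ℝ² ≃ₗᵢ[ℝ] ℝ² :=
  LinearIsometryEquiv.piLpCongrLeft 2 ℝ ℝ (Equiv.swap 0 1)

@[simp]
theorem swapCoords_apply_zero (y : ℝ²) : swapCoords y 0 = y 1 := by
  simp [swapCoords, LinearIsometryEquiv.piLpCongrLeft_apply]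

@[simp]
theorem swapCoords_apply_one (y : ℝ²) : swapCoords y 1 = y 0 := by
  simp [swapCoords, LinearIsometryEquiv.piLpCongrLeft_apply]

theorem hasGradientAt_coord_mul (y : ℝ²) :
    HasGradientAt (fun y : ℝ² => y 0 * y 1) (swapCoords y) y := by
  rw [hasGradientAt_iff_hasFDerivAt]
  refine ((EuclideanSpace.proj (𝕜 := ℝ) (0 : Fin 2)).hasFDerivAt.mul
    (EuclideanSpace.proj (𝕜 := ℝ) (1 : Fin 2)).hasFDerivAt).congr_fderiv ?_
  ext v
  simp [toDual_apply_apply, PiLp.inner_apply, Fin.sum_univ_two]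
  ring

theorem eventuallyEq_linearFitError_max_mul {θ : ℝ²} (h0 : 0 < θ 0) :
    (fun y : ℝ² => linearFitError (max (y 0) 0 * y 1)) =ᶠ[𝓝 θ]
      fun y => linearFitError (y 0 * y 1) := by
  filter_upwards [(by fun_prop : Continuous fun y : ℝ² => y 0).tendsto θ |>.eventually_const_lt h0]
    with y hy
  rw [max_eq_left hy.le]

theorem hess_eq_smul_rankOne_swapCoords {f : ℝ² → ℝ} {θ : ℝ²}
    (hf : f =ᶠ[𝓝 θ] fun y => linearFitError (y 0 * y 1))
    (hθ : θ 0 * θ 1 = c⋆) :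
    hess f θ = (2 / 3 : ℝ) • rankOne ℝ (swapCoords θ) (swapCoords θ) := by
  have hderiv : HasDerivAt (fun c => 2 * (c - c⋆) / 3) (2 / 3) (θ 0 * θ 1) := by
    simpa using (((hasDerivAt_id' _).sub_const c⋆).const_mul 2).div_const 3
  rw [hess, hf.gradient.fderiv_eq]
  exact (hasFDerivAt_gradient_comp_of_deriv_eq_zero (p := fun y : ℝ² => y 0 * y 1)
    hasDerivAt_linearFitError hderiv hasGradientAt_coord_mul swapCoords.hasFDerivAt
    (by simp [hθ])).fderiv

end

/-- **A two-parameter network with ReLU activation** (Proposition 7.2).  For the objective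
`f(θ₁,θ₂) = ∫₀¹ (θ₂·max(θ₁x, 0) − sin x)² dx`, with `U = {θ₁ > 0, θ₂ > 0}` and `𝓜` the set
of global minima: `𝓜 ∩ U` is the nonempty set
`{θ : θ₁ > 0, θ₂ > 0, θ₁θ₂ = 3(sin 1 − cos 1)}`, and `f` is `C²` on `U` with Hessian of
rank `1` at every point of `𝓜 ∩ U`. -/
theorem stmt_19 (f : EuclideanSpace ℝ (Fin 2) → ℝ)
    (hf : ∀ θ : EuclideanSpace ℝ (Fin 2),
      f θ = ∫ x in Set.Icc (0 : ℝ) 1, (θ 1 * max (θ 0 * x) 0 - Real.sin x) ^ 2)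
    (U : Set (EuclideanSpace ℝ (Fin 2)))
    (hU : U = {θ : EuclideanSpace ℝ (Fin 2) | 0 < θ 0 ∧ 0 < θ 1})
    (𝓜 : Set (EuclideanSpace ℝ (Fin 2)))
    (h𝓜 : 𝓜 = {θ | f θ = ⨅ ϑ, f ϑ}) :
    (𝓜 ∩ U = {θ : EuclideanSpace ℝ (Fin 2) |
        0 < θ 0 ∧ 0 < θ 1 ∧ θ 0 * θ 1 = 3 * (Real.sin 1 - Real.cos 1)} ∧
      (𝓜 ∩ U).Nonempty) ∧
    (ContDiffOn ℝ 2 f U ∧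
      ∀ θ ∈ 𝓜 ∩ U, Module.finrank ℝ (LinearMap.range (hess f θ : EuclideanSpace ℝ (Fin 2) →ₗ[ℝ] EuclideanSpace ℝ (Fin 2))) = 1) := by
  obtain rfl : f = fun θ => linearFitError (max (θ 0) 0 * θ 1) :=
    funext fun θ => (hf θ).trans (integral_relu_sub_sin_sq _ _)
  subst hU h𝓜
  have hb := sin_one_sub_cos_one_pos
  have hinf : ⨅ ϑ : EuclideanSpace ℝ (Fin 2), linearFitError (max (ϑ 0) 0 * ϑ 1)
      = linearFitError (3 * (Real.sin 1 - Real.cos 1)) :=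
    ciInf_eq_of_forall_ge_of_forall_gt_exists_lt (fun _ => linearFitError_le _)
      fun w hw => ⟨!₂[1, 3 * (Real.sin 1 - Real.cos 1)], by simpa using hw⟩
  have hM : {θ | linearFitError (max (θ 0) 0 * θ 1) = ⨅ ϑ : EuclideanSpace ℝ (Fin 2),
      linearFitError (max (ϑ 0) 0 * ϑ 1)} ∩ {θ | 0 < θ 0 ∧ 0 < θ 1} =
      {θ : EuclideanSpace ℝ (Fin 2) |
        0 < θ 0 ∧ 0 < θ 1 ∧ θ 0 * θ 1 = 3 * (Real.sin 1 - Real.cos 1)} := by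
    ext θ
    simp only [hinf, Set.mem_inter_iff, Set.mem_ofPred_eq, linearFitError_eq_iff,
      max_mul_eq_iff_of_pos (by positivity : 0 < 3 * (Real.sin 1 - Real.cos 1))]
    tauto
  refine ⟨⟨hM, !₂[1, 3 * (Real.sin 1 - Real.cos 1)], ?_⟩, ?_, fun θ hθ => ?_⟩
  · rw [hM]
    simp [hb]
  · have hsmooth : ContDiff ℝ 2 fun θ : EuclideanSpace ℝ (Fin 2) => linearFitError (θ 0 * θ 1) :=
      contDiff_linearFitError.comp (by fun_prop)
    exact hsmooth.contDiffOn.congr fun θ hθ => by simp [max_eq_left hθ.1.le]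
  · rw [hM] at hθ
    obtain ⟨h0, -, hθ⟩ := hθ
    rw [hess_eq_smul_rankOne_swapCoords (eventuallyEq_linearFitError_max_mul h0) hθ]
    exact finrank_range_smul_rankOne_self (by norm_num)
      (EmbeddingLike.map_ne_zero_iff.mpr (by rintro rfl; simp at h0))
end
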